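/- A semiring S is m-semisimple (rad_m(S) = Δ_S) if and only if S is a subdirect product of a family of m-primitive semirings. -/
import Mathlib


universe u

section Defs

variable (S : Type u) [NonUnitalSemiring S]

structure IsRightAction (M : Type u) [AddCommMonoid M] (act : M → S → M) : Prop where
  add_act : ∀ (m₁ m₂ : M) (s : S), act (m₁ + m₂) s = act m₁ s + act m₂ s
  act_add : ∀ (m : M) (s₁ s₂ : S), act m (s₁ + s₂) = act m s₁ + act m s₂
  act_mul : ∀ (m : M) (s₁ s₂ : S), act m (s₁ * s₂) = act (act m s₁) s₂
  act_zero : ∀ m : M, act m (0 : S) = 0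
  zero_act : ∀ s : S, act (0 : M) s = 0

def IsSubsemimodule (M : Type u) [AddCommMonoid M] (act : M → S → M) (N : Set M) : Prop :=
  (0 : M) ∈ N ∧ (∀ x ∈ N, ∀ y ∈ N, x + y ∈ N) ∧ (∀ x ∈ N, ∀ s : S, act x s ∈ N)

def IsMinimal (M : Type u) [AddCommMonoid M] (act : M → S → M) : Prop :=
  (∃ (m : M) (s : S), act m s ≠ 0) ∧
    ∀ N : Set M, IsSubsemimodule S M act N → N = {(0 : M)} ∨ N = Set.univ

def IsSemimoduleCong (M : Type u) [AddCommMonoid M] (act : M → S → M)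
    (r : M → M → Prop) : Prop :=
  Equivalence r ∧ (∀ a b c : M, r a b → r (a + c) (b + c)) ∧
    (∀ (a b : M) (s : S), r a b → r (act a s) (act b s))

def IsSimple (M : Type u) [AddCommMonoid M] (act : M → S → M) : Prop :=
  IsMinimal S M act ∧ ∀ r : M → M → Prop, IsSemimoduleCong S M act r →
    (∀ a b, r a b → a = b) ∨ (∀ a b, r a b)

def IsRightCongruence (ρ : S → S → Prop) : Prop :=
  Equivalence ρ ∧ (∀ a b c : S, ρ a b → ρ (a + c) (b + c)) ∧
    (∀ a b c : S, ρ a b → ρ (a * c) (b * c))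

def IsCongruence (ρ : S → S → Prop) : Prop :=
  IsRightCongruence S ρ ∧ ∀ a b c : S, ρ a b → ρ (c * a) (c * b)

def IsRegularCong (ρ : S → S → Prop) : Prop := ∃ e : S, ∀ s : S, ρ (e * s) s

def IsRightIdeal (I : Set S) : Prop :=
  (0 : S) ∈ I ∧ (∀ x ∈ I, ∀ y ∈ I, x + y ∈ I) ∧ ∀ x ∈ I, ∀ s : S, x * s ∈ I

def IsSaturated (ρ : S → S → Prop) (I : Set S) : Prop := ∀ s i : S, i ∈ I → ρ s i → s ∈ I

def IsMaximalSaturatedRightIdeal (ρ : S → S → Prop) (I : Set S) : Prop :=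
  IsRightIdeal S I ∧ IsSaturated S ρ I ∧ I ≠ Set.univ ∧
    ∀ J : Set S, IsRightIdeal S J → IsSaturated S ρ J → I ⊆ J → J = I ∨ J = Set.univ

def zeroClass (ρ : S → S → Prop) : Set S := {s : S | ρ s 0}

def IsMRegular (ρ : S → S → Prop) : Prop :=
  IsRightCongruence S ρ ∧ IsRegularCong S ρ ∧
    IsMaximalSaturatedRightIdeal S ρ (zeroClass S ρ)

def IsMaximalRightCongruence (ρ : S → S → Prop) : Prop :=
  IsRightCongruence S ρ ∧ (∃ a b : S, ¬ ρ a b) ∧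
    ∀ τ : S → S → Prop, IsRightCongruence S τ → (∀ a b, ρ a b → τ a b) →
      (∀ a b, τ a b ↔ ρ a b) ∨ (∀ a b, τ a b)

/-- `φ : S → M` realizes `M` as the quotient right `S`-semimodule `S/μ`. -/
def IsQuotientModel (μ : S → S → Prop) (M : Type u) [AddCommMonoid M]
    (act : M → S → M) (φ : S → M) : Prop :=
  Function.Surjective φ ∧ (∀ a b : S, φ (a + b) = φ a + φ b) ∧ φ 0 = 0 ∧
    (∀ (a : S) (s : S), φ (a * s) = act (φ a) s) ∧ ∀ a b : S, φ a = φ b ↔ μ a b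

end Defs

def IsSRHom (R T : Type u) [NonUnitalSemiring R] [NonUnitalSemiring T]
    (f : R → T) : Prop :=
  (∀ a b : R, f (a + b) = f a + f b) ∧ (∀ a b : R, f (a * b) = f a * f b) ∧ f 0 = 0

/-- A semiring is m-primitive if it admits a faithful minimal right semimodule. -/
def IsMPrimitive (T : Type u) [NonUnitalSemiring T] : Prop :=
  ∃ (M : Type u) (inst : AddCommMonoid M) (act : M → T → M),
    @IsRightAction T _ M inst act ∧ @IsMinimal T M inst act ∧
      ∀ a b : T, (∀ m : M, act m a = act m b) → a = b

/-- The m-radical: the intersection of the annihilators of all minimal right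
`S`-semimodules (full relation if none exist). -/
def radm (S : Type u) [NonUnitalSemiring S] : S → S → Prop :=
  fun a b => ∀ (M : Type u) [AddCommMonoid M] (act : M → S → M),
    IsRightAction S M act → IsMinimal S M act → ∀ m : M, act m a = act m b

section AuxMSS

variable {S : Type u} [NonUnitalSemiring S]

/-- The semiring of maps `m ↦ act m s` on a right action. -/
def ActT {M : Type u} (act : M → S → M) : Type u :=
  {f : M → M // ∃ s : S, f = fun m => act m s}

def actSemiring {M : Type u} [AddCommMonoid M] (act : M → S → M)
    (h : IsRightAction S M act) : NonUnitalSemiring (ActT act) :=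
  letI : Add (ActT act) := ⟨fun a b => ⟨fun m => a.1 m + b.1 m, by
    obtain ⟨s₁, h₁⟩ := a.2
    obtain ⟨s₂, h₂⟩ := b.2
    exact ⟨s₁ + s₂, by funext m; rw [h₁, h₂]; exact (h.act_add m s₁ s₂).symm⟩⟩⟩
  letI : Zero (ActT act) := ⟨⟨fun _ => 0, 0, funext fun m => (h.act_zero m).symm⟩⟩
  letI : Mul (ActT act) := ⟨fun a b => ⟨fun m => b.1 (a.1 m), by
    obtain ⟨s₁, h₁⟩ := a.2
    obtain ⟨s₂, h₂⟩ := b.2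
    exact ⟨s₁ * s₂, by funext m; rw [h₁, h₂]; exact (h.act_mul m s₁ s₂).symm⟩⟩⟩
  { add := (· + ·)
    zero := (0 : ActT act)
    mul := (· * ·)
    nsmul := nsmulRec
    add_assoc := fun a b c => Subtype.ext (funext fun m => add_assoc _ _ _)
    zero_add := fun a => Subtype.ext (funext fun m => zero_add _)
    add_zero := fun a => Subtype.ext (funext fun m => add_zero _)
    add_comm := fun a b => Subtype.ext (funext fun m => add_comm _ _)
    left_distrib := fun a b c => Subtype.ext (funext fun m => rfl)
    right_distrib := fun a b c => Subtype.ext (funext fun m => by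
      show c.1 (a.1 m + b.1 m) = c.1 (a.1 m) + c.1 (b.1 m)
      obtain ⟨s, hs⟩ := c.2
      rw [hs]
      exact h.add_act _ _ s)
    zero_mul := fun a => Subtype.ext (funext fun m => by
      show a.1 0 = (0 : M)
      obtain ⟨s, hs⟩ := a.2
      rw [hs]
      exact h.zero_act s)
    mul_zero := fun a => Subtype.ext (funext fun m => rfl)
    mul_assoc := fun a b c => Subtype.ext (funext fun m => rfl) }

def actMap {M : Type u} (act : M → S → M) : S → ActT act :=
  fun s => ⟨fun m => act m s, s, rfl⟩

lemma actMap_hom {M : Type u} [AddCommMonoid M] {act : M → S → M}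
    (h : IsRightAction S M act) :
    @IsSRHom S (ActT act) _ (actSemiring act h) (actMap act) :=
  ⟨fun a b => Subtype.ext (funext fun m => h.act_add m a b),
   fun a b => Subtype.ext (funext fun m => h.act_mul m a b),
   Subtype.ext (funext fun m => h.act_zero m)⟩

lemma actMap_surj {M : Type u} (act : M → S → M) :
    Function.Surjective (actMap act) :=
  fun t => ⟨t.2.choose, Subtype.ext t.2.choose_spec.symm⟩

lemma actMap_eq_iff {M : Type u} {act : M → S → M} (a b : S) :
    actMap act a = actMap act b ↔ ∀ m, act m a = act m b := by
  constructor
  · intro hab m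
    exact congrFun (congrArg Subtype.val hab) m
  · intro hab
    exact Subtype.ext (funext hab)

lemma actT_primitive {M : Type u} [inst : AddCommMonoid M]
    {act : M → S → M} (h : IsRightAction S M act) (hmin : IsMinimal S M act) :
    @IsMPrimitive (ActT act) (actSemiring act h) := by
  letI := actSemiring act h
  refine ⟨M, inst, fun m t => t.1 m, ?_, ?_, ?_⟩
  · constructor
    · intro m₁ m₂ t
      obtain ⟨s, hs⟩ := t.2
      simp only [hs]
      exact h.add_act m₁ m₂ s
    · intro m t₁ t₂; rfl
    · intro m t₁ t₂; rfl
    · intro m; rfl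
    · intro t
      obtain ⟨s, hs⟩ := t.2
      simp only [hs]
      exact h.zero_act s
  · constructor
    · obtain ⟨m, s, hms⟩ := hmin.1
      exact ⟨m, actMap act s, hms⟩
    · intro N hN
      exact hmin.2 N ⟨hN.1, hN.2.1, fun x hx s => hN.2.2 x hx (actMap act s)⟩
  · intro a b hab
    exact Subtype.ext (funext hab)

/-- `ρ` is the annihilator congruence of some minimal right `S`-semimodule. -/
def AnnOf (ρ : S → S → Prop) : Prop :=
  ∃ (M : Type u) (inst : AddCommMonoid M) (act : M → S → M),
    @IsRightAction S _ M inst act ∧ @IsMinimal S M inst act ∧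
      ∀ a b : S, ρ a b ↔ ∀ m, act m a = act m b

noncomputable def pickM {ρ : S → S → Prop} (h : AnnOf ρ) : Type u := Exists.choose h

noncomputable def pickInst {ρ : S → S → Prop} (h : AnnOf ρ) :
    AddCommMonoid (pickM h) := Exists.choose (Exists.choose_spec h)

noncomputable def pickAct {ρ : S → S → Prop} (h : AnnOf ρ) :
    pickM h → S → pickM h := Exists.choose (Exists.choose_spec (Exists.choose_spec h))

lemma pick_spec {ρ : S → S → Prop} (h : AnnOf ρ) :
    @IsRightAction S _ (pickM h) (pickInst h) (pickAct h) ∧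
      @IsMinimal S (pickM h) (pickInst h) (pickAct h) ∧
      ∀ a b : S, ρ a b ↔ ∀ m, pickAct h m a = pickAct h m b :=
  Exists.choose_spec (Exists.choose_spec (Exists.choose_spec h))

end AuxMSS

/-- A semiring `S` is m-semisimple (`rad_m(S) = Δ_S`) iff it is a
subdirect product of a family of m-primitive semirings. -/
theorem mSemisimple_iff_subdirect {S : Type u} [NonUnitalSemiring S] :
    (∀ a b : S, radm S a b → a = b) ↔
      ∃ (ι : Type u) (T : ι → Type u) (inst : ∀ i, NonUnitalSemiring (T i))
        (f : ∀ i, S → T i),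
        (∀ i, @IsSRHom S (T i) _ (inst i) (f i) ∧ Function.Surjective (f i) ∧
          @IsMPrimitive (T i) (inst i)) ∧
        ∀ a b : S, (∀ i, f i a = f i b) → a = b := by
  classical
  constructor
  · intro h
    refine ⟨{ρ : S → S → Prop // AnnOf ρ},
      fun i => ActT (pickAct i.2),
      fun i => @actSemiring S _ _ (pickInst i.2) (pickAct i.2) (pick_spec i.2).1,
      fun i => actMap (pickAct i.2), ?_, ?_⟩
    · intro i
      letI := pickInst i.2
      exact ⟨actMap_hom (pick_spec i.2).1, actMap_surj _,
        actT_primitive (pick_spec i.2).1 (pick_spec i.2).2.1⟩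
    · intro a b hab
      refine h a b ?_
      intro M instM act hAct hMin m
      have hi : AnnOf (S := S) (fun x y => ∀ m : M, act m x = act m y) :=
        ⟨M, instM, act, hAct, hMin, fun _ _ => Iff.rfl⟩
      have h2 := (actMap_eq_iff a b).1 (hab ⟨_, hi⟩)
      exact ((pick_spec hi).2.2 a b).mpr h2 m
  · rintro ⟨ι, T, inst, f, hprop, hinj⟩ a b hab
    refine hinj a b fun i => ?_
    obtain ⟨hhom, hsurj, hprim⟩ := hprop i
    letI := inst i
    obtain ⟨M, instM, act, hAct, hMin, hFaith⟩ := hprim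
    letI := instM
    have hAct' : IsRightAction S M (fun m s => act m (f i s)) :=
      { add_act := fun m₁ m₂ s => hAct.add_act m₁ m₂ (f i s)
        act_add := fun m s₁ s₂ => by
          show act m (f i (s₁ + s₂)) = act m (f i s₁) + act m (f i s₂)
          rw [hhom.1]; exact hAct.act_add m _ _
        act_mul := fun m s₁ s₂ => by
          show act m (f i (s₁ * s₂)) = act (act m (f i s₁)) (f i s₂)
          rw [hhom.2.1]; exact hAct.act_mul m _ _
        act_zero := fun m => by
          show act m (f i 0) = 0
          rw [hhom.2.2]; exact hAct.act_zero m
        zero_act := fun s => hAct.zero_act (f i s) }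
    have hMin' : IsMinimal S M (fun m s => act m (f i s)) := by
      constructor
      · obtain ⟨m, t, hmt⟩ := hMin.1
        obtain ⟨s, rfl⟩ := hsurj t
        exact ⟨m, s, hmt⟩
      · intro N hN
        refine hMin.2 N ⟨hN.1, hN.2.1, fun x hx t => ?_⟩
        obtain ⟨s, rfl⟩ := hsurj t
        exact hN.2.2 x hx s
    exact hFaith _ _ fun m => hab M (fun m s => act m (f i s)) hAct' hMin' m
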